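/- Let 0 < ε < 1/2, let M ≥ 1 be an integer, set c = 1/(1+2ε) and b_n = 1/2 − (n−1)(1/2+ε)/M for 1 ≤ n ≤ M+1. Then there exist a constant C > 0 and ρ₀ > 0 such that for every ρ ≥ ρ₀, with k_F = √(4πρ), and every 1 ≤ n ≤ M, ρ^{−(n−1)/(cM)} · (2π)^{−4} · Leb{(k,l) ∈ ℝ² × ℝ² : |k| ≤ k_F, |l| ≥ k_F, |k − l| < ρ^ε, ρ^{−b_n} ≤ |l| − |k| < ρ^{−b_{n+1}}} ≤ C · ρ^{−1/2 + ε} · (ρ^{1/(cM)} − ρ^{1/(2cM)}). (This is estimate (2.45) of Corollary 2.4.) -/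

import Mathlib

open MeasureTheory Real

/-- The exponents `b_n = 1/2 − (n−1)(1/2+ε)/M`. -/
noncomputable def bExp (ε : ℝ) (M : ℕ) (n : ℕ) : ℝ :=
  1/2 - ((n : ℝ) - 1) * (1/2 + ε) / M

/-- The constant `c = 1/(1+2ε)` (so that `2c = (1/2+ε)⁻¹`). -/
noncomputable def cVal (ε : ℝ) : ℝ := 1 / (1 + 2 * ε)

section Aux

open Set

-- slice lemma: sqrt bound
lemma sqrt_slice (b δ x R : ℝ) (hδ : 0 < δ) (hδb : δ ≤ b) (h3R : 3 * R ≤ b)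
    (hx : |x| ≤ R) (hR : 0 < R) :
    Real.sqrt ((b+δ)^2 - x^2) ≤ Real.sqrt (b^2 - x^2) + 6 * δ := by
  have hb : 0 < b := lt_of_lt_of_le (by linarith) h3R
  have hx2 : x^2 ≤ R^2 := sq_le_sq' (by linarith [abs_le.1 hx]) (abs_le.1 hx).2
  have hR2 : R^2 ≤ (b/3)^2 := by nlinarith
  have h1 : b^2/2 ≤ b^2 - x^2 := by nlinarith
  have h2 : b/2 ≤ Real.sqrt (b^2 - x^2) := by
    have := Real.sqrt_le_sqrt (show (b/2)^2 ≤ b^2 - x^2 by nlinarith)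
    rwa [Real.sqrt_sq (by linarith)] at this
  have h0 : (0:ℝ) ≤ b^2 - x^2 := by nlinarith
  have key : (b+δ)^2 - x^2 ≤ (Real.sqrt (b^2-x^2) + 6*δ)^2 := by
    have hs : (Real.sqrt (b^2-x^2))^2 = b^2 - x^2 := Real.sq_sqrt h0
    nlinarith [Real.sqrt_nonneg (b^2-x^2)]
  calc Real.sqrt ((b+δ)^2 - x^2) ≤ Real.sqrt ((Real.sqrt (b^2-x^2) + 6*δ)^2) :=
        Real.sqrt_le_sqrt key
    _ = Real.sqrt (b^2-x^2) + 6*δ := Real.sqrt_sq (by positivity)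

def slabSet (b δ R : ℝ) : Set (ℝ × ℝ) :=
  {p : ℝ × ℝ | p.1 ∈ Set.Ioo (-R) R ∧
    p.2 ∈ Set.Icc (Real.sqrt (b^2 - p.1^2)) (Real.sqrt ((b+δ)^2 - p.1^2))}

lemma slabSet_meas (b δ R : ℝ) : MeasurableSet (slabSet b δ R) := by
  have hmf : Measurable fun x : ℝ => Real.sqrt (b^2 - x^2) :=
    (Real.continuous_sqrt.comp (by continuity)).measurable
  have hmg : Measurable fun x : ℝ => Real.sqrt ((b+δ)^2 - x^2) :=
    (Real.continuous_sqrt.comp (by continuity)).measurable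
  apply MeasurableSet.inter
  · exact measurable_fst measurableSet_Ioo
  · exact MeasurableSet.inter
      (measurableSet_le (hmf.comp measurable_fst) measurable_snd)
      (measurableSet_le measurable_snd (hmg.comp measurable_fst))

lemma euclid_norm_sq (x : EuclideanSpace ℝ (Fin 2)) : ‖x‖^2 = (x 0)^2 + (x 1)^2 := by
  rw [EuclideanSpace.norm_eq, Real.sq_sqrt (by positivity)]
  simp [Fin.sum_univ_two, Real.norm_eq_abs, sq_abs]

lemma slab_volume' (b δ R : ℝ) (hR : 0 < R) (hδ : 0 < δ) (hδb : δ ≤ b) (h3R : 3 * R ≤ b) :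
    volume (slabSet b δ R) ≤ ENNReal.ofReal (12 * R * δ) := by
  show volume {p : ℝ × ℝ | p.1 ∈ Set.Ioo (-R) R ∧
      p.2 ∈ Set.Icc (Real.sqrt (b^2 - p.1^2)) (Real.sqrt ((b+δ)^2 - p.1^2))}
      ≤ ENNReal.ofReal (12 * R * δ)
  have hmf : Measurable fun x : ℝ => Real.sqrt (b^2 - x^2) :=
    (Real.continuous_sqrt.comp (by continuity)).measurable
  have hmg : Measurable fun x : ℝ => Real.sqrt ((b+δ)^2 - x^2) :=
    (Real.continuous_sqrt.comp (by continuity)).measurable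
  have hmeas : MeasurableSet {p : ℝ × ℝ | p.1 ∈ Set.Ioo (-R) R ∧
      p.2 ∈ Set.Icc (Real.sqrt (b^2 - p.1^2)) (Real.sqrt ((b+δ)^2 - p.1^2))} := by
    apply MeasurableSet.inter
    · exact measurable_fst measurableSet_Ioo
    · exact MeasurableSet.inter
        (measurableSet_le (hmf.comp measurable_fst) measurable_snd)
        (measurableSet_le measurable_snd (hmg.comp measurable_fst))
  rw [MeasureTheory.Measure.volume_eq_prod, MeasureTheory.Measure.prod_apply hmeas]
  have hslice : ∀ x : ℝ,
      volume (Prod.mk x ⁻¹' {p : ℝ × ℝ | p.1 ∈ Set.Ioo (-R) R ∧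
        p.2 ∈ Set.Icc (Real.sqrt (b^2 - p.1^2)) (Real.sqrt ((b+δ)^2 - p.1^2))})
      ≤ (Set.Ioo (-R) R).indicator (fun _ => ENNReal.ofReal (6*δ)) x := by
    intro x
    by_cases hx : x ∈ Set.Ioo (-R) R
    · rw [Set.indicator_of_mem hx]
      have : Prod.mk x ⁻¹' {p : ℝ × ℝ | p.1 ∈ Set.Ioo (-R) R ∧
          p.2 ∈ Set.Icc (Real.sqrt (b^2 - p.1^2)) (Real.sqrt ((b+δ)^2 - p.1^2))}
          = Set.Icc (Real.sqrt (b^2 - x^2)) (Real.sqrt ((b+δ)^2 - x^2)) := by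
        ext y
        simp only [Set.mem_preimage, Set.mem_setOf_eq, Set.mem_Ioo, Set.mem_Icc]
        exact ⟨fun h => h.2, fun h => ⟨⟨hx.1, hx.2⟩, h⟩⟩
      rw [this, Real.volume_Icc]
      apply ENNReal.ofReal_le_ofReal
      have := sqrt_slice b δ x R hδ hδb h3R (by rw [abs_le]; constructor <;> linarith [hx.1, hx.2]) hR
      linarith
    · rw [Set.indicator_of_notMem hx]
      have : Prod.mk x ⁻¹' {p : ℝ × ℝ | p.1 ∈ Set.Ioo (-R) R ∧
          p.2 ∈ Set.Icc (Real.sqrt (b^2 - p.1^2)) (Real.sqrt ((b+δ)^2 - p.1^2))} = ∅ := by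
        ext y; simp only [Set.mem_preimage, Set.mem_setOf_eq, Set.mem_empty_iff_false, iff_false]
        intro h; exact hx h.1
      rw [this]
      simp
  calc ∫⁻ x, volume (Prod.mk x ⁻¹' _) ≤
      ∫⁻ x, (Set.Ioo (-R) R).indicator (fun _ => ENNReal.ofReal (6*δ)) x :=
        lintegral_mono hslice
    _ = ENNReal.ofReal (6*δ) * volume (Set.Ioo (-R) R) := by
        rw [lintegral_indicator_const measurableSet_Ioo]
    _ ≤ ENNReal.ofReal (12 * R * δ) := by
        rw [Real.volume_Ioo, ← ENNReal.ofReal_mul (by positivity)]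
        exact ENNReal.ofReal_le_ofReal (by nlinarith)

set_option maxHeartbeats 2000000 in
lemma section_bound (k : EuclideanSpace ℝ (Fin 2)) (R δ : ℝ) (hR : 0 < R) (hδ : 0 < δ)
    (hδR : δ ≤ R) (h3 : 3 * R ≤ ‖k‖) :
    volume {l : EuclideanSpace ℝ (Fin 2) | ‖k‖ ≤ ‖l‖ ∧ ‖l‖ - ‖k‖ < δ ∧ ‖k - l‖ < R}
      ≤ ENNReal.ofReal (12 * R * δ) := by
  set b := ‖k‖ with hbdef
  have hb : 0 < b := lt_of_lt_of_le (by linarith) h3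
  set e : EuclideanSpace ℝ (Fin 2) := b • EuclideanSpace.single (1 : Fin 2) (1:ℝ) with hedef
  have he : ‖e‖ = b := by
    rw [hedef, norm_smul, EuclideanSpace.norm_single]
    simp [abs_of_nonneg hb.le]
  have he0 : e 0 = 0 := by simp [hedef, EuclideanSpace.single_apply]
  have he1 : e 1 = b := by simp [hedef, EuclideanSpace.single_apply]
  obtain ⟨φ, hφk⟩ : ∃ φ : EuclideanSpace ℝ (Fin 2) ≃ₗᵢ[ℝ] EuclideanSpace ℝ (Fin 2),
      φ k = e := ⟨Submodule.reflection (ℝ ∙ (k - e))ᗮ, Submodule.reflection_sub (by rw [he])⟩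
  set m : EuclideanSpace ℝ (Fin 2) → ℝ × ℝ := fun l =>
    MeasurableEquiv.finTwoArrow ((MeasurableEquiv.toLp 2 (Fin 2 → ℝ)).symm (φ l)) with hmdef
  have hmp : MeasurePreserving m :=
    ((volume_preserving_finTwoArrow ℝ).comp
      (EuclideanSpace.volume_preserving_symm_measurableEquiv_toLp (Fin 2))).comp
      (φ.measurePreserving)
  have hmcoord : ∀ l, m l = ((φ l) 0, (φ l) 1) := fun l => rfl
  have hsub : {l : EuclideanSpace ℝ (Fin 2) | ‖k‖ ≤ ‖l‖ ∧ ‖l‖ - ‖k‖ < δ ∧ ‖k - l‖ < R}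
      ⊆ m ⁻¹' (slabSet b δ R) := by
    intro l hl
    obtain ⟨h1, h2, h3'⟩ := hl
    set y := φ l with hydef
    have hy : ‖y‖ = ‖l‖ := φ.norm_map l
    have hyd : ‖y - e‖ = ‖k - l‖ := by
      rw [← hφk, ← map_sub, φ.norm_map, norm_sub_rev]
    have hA : (y 0)^2 + (y 1 - b)^2 < R^2 := by
      have h4 : ‖y - e‖^2 < R^2 := by
        apply pow_lt_pow_left₀ (by rw [hyd]; exact h3') (norm_nonneg _) two_ne_zero
      rwa [euclid_norm_sq, PiLp.sub_apply, PiLp.sub_apply, he0, he1, sub_zero] at h4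
    have hy0R : (y 0)^2 < R^2 := by nlinarith [sq_nonneg (y 1 - b)]
    have hy0lt : -R < y 0 ∧ y 0 < R := by
      constructor <;> nlinarith [sq_nonneg (y 0 + R), sq_nonneg (y 0 - R)]
    have hy1pos : 0 < y 1 := by nlinarith [sq_nonneg (y 0), sq_nonneg (y 1 - b + R)]
    have hnsq : ‖y‖^2 = (y 0)^2 + (y 1)^2 := euclid_norm_sq y
    have hlow : Real.sqrt (b^2 - (y 0)^2) ≤ y 1 := by
      have hge : b^2 - (y 0)^2 ≤ (y 1)^2 := by
        have : b^2 ≤ ‖y‖^2 := by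
          rw [hy]; exact pow_le_pow_left₀ hb.le h1 2
        nlinarith
      calc Real.sqrt (b^2 - (y 0)^2) ≤ Real.sqrt ((y 1)^2) := Real.sqrt_le_sqrt hge
        _ = y 1 := Real.sqrt_sq hy1pos.le
    have hup : y 1 ≤ Real.sqrt ((b+δ)^2 - (y 0)^2) := by
      have hle : (y 1)^2 ≤ (b+δ)^2 - (y 0)^2 := by
        have : ‖y‖^2 < (b+δ)^2 := by
          rw [hy]; exact pow_lt_pow_left₀ (by linarith) (norm_nonneg _) two_ne_zero
        nlinarith
      calc y 1 = Real.sqrt ((y 1)^2) := (Real.sqrt_sq hy1pos.le).symm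
        _ ≤ Real.sqrt ((b+δ)^2 - (y 0)^2) := Real.sqrt_le_sqrt hle
    show m l ∈ slabSet b δ R
    rw [hmcoord]
    exact ⟨⟨hy0lt.1, hy0lt.2⟩, hlow, hup⟩
  calc volume {l : EuclideanSpace ℝ (Fin 2) | ‖k‖ ≤ ‖l‖ ∧ ‖l‖ - ‖k‖ < δ ∧ ‖k - l‖ < R}
      ≤ volume (m ⁻¹' (slabSet b δ R)) := measure_mono hsub
    _ = volume (slabSet b δ R) :=
        hmp.measure_preimage (slabSet_meas b δ R).nullMeasurableSet
    _ ≤ ENNReal.ofReal (12 * R * δ) := slab_volume' b δ R hR hδ (by linarith) (by linarith)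


lemma ball2_volume (r : ℝ) (hr : 0 ≤ r) :
    volume (Metric.closedBall (0 : EuclideanSpace ℝ (Fin 2)) r) = ENNReal.ofReal (π * r^2) := by
  rw [EuclideanSpace.volume_closedBall]
  simp only [Fintype.card_fin]
  rw [show ((2:ℕ):ℝ)/2 + 1 = 2 by norm_num, Real.Gamma_two]
  rw [← ENNReal.ofReal_pow hr]
  rw [← ENNReal.ofReal_mul (by positivity)]
  congr 1
  rw [div_one, sq_sqrt pi_pos.le]
  ring

lemma annulus_bound (r δ : ℝ) (hδ : 0 < δ) (hr : δ ≤ r) :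
    volume {k : EuclideanSpace ℝ (Fin 2) | r - δ < ‖k‖ ∧ ‖k‖ ≤ r}
      ≤ ENNReal.ofReal (2 * π * r * δ) := by
  have hsub : {k : EuclideanSpace ℝ (Fin 2) | r - δ < ‖k‖ ∧ ‖k‖ ≤ r}
      ⊆ Metric.closedBall 0 r \ Metric.closedBall 0 (r - δ) := by
    intro k hk
    constructor
    · rw [Metric.mem_closedBall, dist_zero_right]; exact hk.2
    · rw [Metric.mem_closedBall, dist_zero_right]; push_neg; exact hk.1
  refine le_trans (measure_mono hsub) ?_
  rw [measure_diff (Metric.closedBall_subset_closedBall (by linarith))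
    measurableSet_closedBall.nullMeasurableSet measure_closedBall_lt_top.ne]
  rw [ball2_volume r (by linarith), ball2_volume (r - δ) (by linarith)]
  rw [tsub_le_iff_right, ← ENNReal.ofReal_add (mul_nonneg (mul_nonneg (mul_nonneg (by norm_num) pi_pos.le) (by linarith : (0:ℝ) ≤ r)) hδ.le) (mul_nonneg pi_pos.le (sq_nonneg _))]
  exact ENNReal.ofReal_le_ofReal (by nlinarith [mul_pos pi_pos (mul_pos hδ hδ)])

end Aux

set_option maxHeartbeats 2000000 in
/-- Estimate (2.45) of Corollary 2.4: with `V_n = (2π)^{−4} · Leb(𝔖_n)`,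
`ρ^{−(n−1)/(cM)} · V_n ≤ C · ρ^{−1/2+ε} · (ρ^{1/(cM)} − ρ^{1/(2cM)})` for `1 ≤ n ≤ M`. -/
theorem weighted_shell_volume_bound
    (ε : ℝ) (hε0 : 0 < ε) (hε : ε < 1/2) (M : ℕ) (hM : 1 ≤ M) :
    ∃ C : ℝ, 0 < C ∧ ∃ ρ₀ : ℝ, 0 < ρ₀ ∧ ∀ ρ : ℝ, ρ₀ ≤ ρ →
      ∀ n : ℕ, 1 ≤ n → n ≤ M →
      ρ ^ (-(((n : ℝ) - 1) / (cVal ε * M))) * ((2 * π) ^ (4:ℕ))⁻¹ *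
        (volume {p : EuclideanSpace ℝ (Fin 2) × EuclideanSpace ℝ (Fin 2) |
            ‖p.1‖ ≤ Real.sqrt (4 * π * ρ) ∧ Real.sqrt (4 * π * ρ) ≤ ‖p.2‖ ∧
            ‖p.1 - p.2‖ < ρ ^ ε ∧
            ρ ^ (-(bExp ε M n)) ≤ ‖p.2‖ - ‖p.1‖ ∧
            ‖p.2‖ - ‖p.1‖ < ρ ^ (-(bExp ε M (n+1)))}).toReal
        ≤ C * ρ ^ (-(1/2) + ε) *
            (ρ ^ (1 / (cVal ε * M)) - ρ ^ (1 / (2 * cVal ε * M))) := by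
  have h12 : (0:ℝ) < 1 + 2*ε := by linarith
  have hc : 0 < cVal ε := div_pos one_pos h12
  have hM0 : (0:ℝ) < M := Nat.cast_pos.mpr (lt_of_lt_of_le one_pos hM)
  have hθ : (0:ℝ) < 2 * cVal ε * M := mul_pos (mul_pos two_pos hc) hM0
  have hhe : (0:ℝ) < 1/2 - ε := by linarith
  refine ⟨100, by norm_num,
    max ((2:ℝ) ^ ((2:ℝ) * cVal ε * M)) ((2:ℝ) ^ (((1:ℝ)/2 - ε)⁻¹)),
    lt_max_of_lt_left (Real.rpow_pos_of_pos two_pos _), ?_⟩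
  intro ρ hρ n hn1 hnM
  have hρ2a : (2:ℝ) ^ ((2:ℝ) * cVal ε * M) ≤ ρ := le_trans (le_max_left _ _) hρ
  have hρ2b : (2:ℝ) ^ (((1:ℝ)/2 - ε)⁻¹) ≤ ρ := le_trans (le_max_right _ _) hρ
  have hρ1 : 1 ≤ ρ :=
    le_trans (Real.one_le_rpow one_le_two (by positivity)) hρ2b
  have hρ0 : 0 < ρ := lt_of_lt_of_le one_pos hρ1
  set kF := Real.sqrt (4 * π * ρ) with hkFdef
  set R := ρ ^ ε with hRdef
  set δ := ρ ^ (-(bExp ε M (n+1))) with hδdef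
  set δ1 := ρ ^ (-(bExp ε M n)) with hδ1def
  have hR0 : 0 < R := Real.rpow_pos_of_pos hρ0 _
  have hδ0 : 0 < δ := Real.rpow_pos_of_pos hρ0 _
  have hδ10 : 0 < δ1 := Real.rpow_pos_of_pos hρ0 _
  have hcast : ((n+1 : ℕ) : ℝ) = (n:ℝ) + 1 := by push_cast; ring
  have hnle : ((n:ℝ)) ≤ M := Nat.cast_le.mpr hnM
  have hexp : -(bExp ε M (n+1)) ≤ ε := by
    simp only [bExp, hcast]
    have h2 : ((n:ℝ)) * (1/2 + ε) / M ≤ (1/2 + ε) := by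
      rw [div_le_iff₀ hM0]; nlinarith
    have h3 : ((n:ℝ) + 1 - 1) * (1/2 + ε) / M = (n:ℝ) * (1/2+ε) / M := by ring_nf
    rw [h3]; linarith
  have hδR : δ ≤ R := Real.rpow_le_rpow_of_exponent_le hρ1 hexp
  have hsq3 : (3:ℝ) ≤ Real.sqrt (4*π) := by
    have h9 : (9:ℝ) ≤ 4*π := by nlinarith [pi_gt_three]
    calc (3:ℝ) = Real.sqrt 9 := by
          rw [show (9:ℝ) = 3^2 by norm_num, Real.sqrt_sq (by norm_num : (0:ℝ) ≤ 3)]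
      _ ≤ Real.sqrt (4*π) := Real.sqrt_le_sqrt h9
  have hkF : kF = Real.sqrt (4*π) * ρ ^ ((1:ℝ)/2) := by
    rw [hkFdef, Real.sqrt_mul (by positivity) ρ, Real.sqrt_eq_rpow ρ]
  have hhalf : (2:ℝ) ≤ ρ ^ ((1:ℝ)/2 - ε) := by
    calc (2:ℝ) = ((2:ℝ) ^ (((1:ℝ)/2-ε)⁻¹)) ^ ((1:ℝ)/2 - ε) := by
          rw [← Real.rpow_mul (by norm_num : (0:ℝ) ≤ 2),
            inv_mul_cancel₀ (ne_of_gt hhe), Real.rpow_one]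
      _ ≤ ρ ^ ((1:ℝ)/2 - ε) := Real.rpow_le_rpow (by positivity) hρ2b hhe.le
  have h4R : 4 * R ≤ kF := by
    have hsplit : ρ ^ ((1:ℝ)/2) = R * ρ ^ ((1:ℝ)/2 - ε) := by
      rw [hRdef, ← Real.rpow_add hρ0]; ring_nf
    rw [hkF, hsplit]
    calc 4 * R ≤ 3 * (R * 2) := by linarith
      _ ≤ Real.sqrt (4*π) * (R * ρ ^ ((1:ℝ)/2 - ε)) := by
          apply mul_le_mul hsq3 (mul_le_mul_of_nonneg_left hhalf hR0.le)
            (by positivity) (by positivity)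
  -- volume bound
  set S : Set (EuclideanSpace ℝ (Fin 2) × EuclideanSpace ℝ (Fin 2)) :=
    {p | ‖p.1‖ ≤ kF ∧ kF ≤ ‖p.2‖ ∧ ‖p.1 - p.2‖ < R ∧
      δ1 ≤ ‖p.2‖ - ‖p.1‖ ∧ ‖p.2‖ - ‖p.1‖ < δ} with hSdef
  have m1 : Measurable fun p : EuclideanSpace ℝ (Fin 2) × EuclideanSpace ℝ (Fin 2) => ‖p.1‖ :=
    measurable_fst.norm
  have m2 : Measurable fun p : EuclideanSpace ℝ (Fin 2) × EuclideanSpace ℝ (Fin 2) => ‖p.2‖ :=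
    measurable_snd.norm
  have m3 : Measurable fun p : EuclideanSpace ℝ (Fin 2) × EuclideanSpace ℝ (Fin 2) =>
      ‖p.1 - p.2‖ := (measurable_fst.sub measurable_snd).norm
  have hSm : MeasurableSet S :=
    (measurableSet_le m1 measurable_const).inter
      ((measurableSet_le measurable_const m2).inter
        ((measurableSet_lt m3 measurable_const).inter
          ((measurableSet_le measurable_const (m2.sub m1)).inter
            (measurableSet_lt (m2.sub m1) measurable_const))))
  set A := {k : EuclideanSpace ℝ (Fin 2) | kF - δ < ‖k‖ ∧ ‖k‖ ≤ kF} with hAdef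
  have hA : MeasurableSet A :=
    (measurableSet_lt measurable_const measurable_norm).inter
      (measurableSet_le measurable_norm measurable_const)
  have hVle : volume S ≤ ENNReal.ofReal (12*R*δ * (2*π*kF*δ)) := by
    rw [MeasureTheory.Measure.volume_eq_prod, MeasureTheory.Measure.prod_apply hSm]
    have hpt : ∀ k : EuclideanSpace ℝ (Fin 2), volume (Prod.mk k ⁻¹' S)
        ≤ A.indicator (fun _ => ENNReal.ofReal (12*R*δ)) k := by
      intro k
      by_cases hk : k ∈ A
      · rw [Set.indicator_of_mem hk]
        refine le_trans (measure_mono ?_) (section_bound k R δ hR0 hδ0 hδR ?_)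
        · intro l hl
          obtain ⟨ha, hb', hc', hd, he'⟩ := hl
          exact ⟨by linarith, by linarith, hc'⟩
        · have := hk.1
          linarith
      · rw [Set.indicator_of_notMem hk]
        have hempty : Prod.mk k ⁻¹' S = ∅ := by
          rw [Set.eq_empty_iff_forall_notMem]
          intro l hl
          obtain ⟨ha, hb', hc', hd, he'⟩ := hl
          exact hk ⟨by linarith, ha⟩
        rw [hempty]; simp
    calc ∫⁻ k, volume (Prod.mk k ⁻¹' S)
        ≤ ∫⁻ k, A.indicator (fun _ => ENNReal.ofReal (12*R*δ)) k := lintegral_mono hpt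
      _ = ENNReal.ofReal (12*R*δ) * volume A := lintegral_indicator_const hA _
      _ ≤ ENNReal.ofReal (12*R*δ) * ENNReal.ofReal (2*π*kF*δ) :=
          mul_le_mul_right (annulus_bound kF δ hδ0 (by linarith)) _
      _ = ENNReal.ofReal (12*R*δ*(2*π*kF*δ)) := by
          rw [← ENNReal.ofReal_mul (by positivity)]
  have hkF0 : 0 < kF := by linarith
  have hV : (volume S).toReal ≤ 12*R*δ*(2*π*kF*δ) :=
    ENNReal.toReal_le_of_le_ofReal (by positivity) hVle
  -- rpow algebra
  have hδ2 : δ^2 = ρ ^ ((-(bExp ε M (n+1))) * 2) := by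
    rw [hδdef, ← Real.rpow_natCast (ρ ^ (-(bExp ε M (n+1)))) 2,
      ← Real.rpow_mul hρ0.le]
    norm_num
  have hkey0 : ρ ^ (-(((n : ℝ) - 1) / (cVal ε * M))) *
      (ρ ^ ((1:ℝ)/2) * (ρ ^ ε * ρ ^ ((-(bExp ε M (n+1))) * 2)))
      = ρ ^ (1 / (cVal ε * M)) * ρ ^ (-(1/2:ℝ) + ε) := by
    rw [← Real.rpow_add hρ0, ← Real.rpow_add hρ0, ← Real.rpow_add hρ0,
      ← Real.rpow_add hρ0]
    congr 1
    simp only [bExp, cVal, hcast]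
    have hM' : (M:ℝ) ≠ 0 := ne_of_gt hM0
    have h2ε : (1:ℝ) + 2*ε ≠ 0 := ne_of_gt h12
    field_simp
    ring
  have hkey : ρ ^ (-(((n : ℝ) - 1) / (cVal ε * M))) * (kF * (R * δ^2))
      = Real.sqrt (4*π) * (ρ ^ (1 / (cVal ε * M)) * ρ ^ (-(1/2:ℝ) + ε)) := by
    calc ρ ^ (-(((n : ℝ) - 1) / (cVal ε * M))) * (kF * (R * δ^2))
        = Real.sqrt (4*π) * (ρ ^ (-(((n : ℝ) - 1) / (cVal ε * M))) *
            (ρ ^ ((1:ℝ)/2) * (ρ ^ ε * ρ ^ ((-(bExp ε M (n+1))) * 2)))) := by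
          rw [hkF, hδ2, hRdef]; ring
      _ = Real.sqrt (4*π) * (ρ ^ (1 / (cVal ε * M)) * ρ ^ (-(1/2:ℝ) + ε)) := by
          rw [hkey0]
  -- constant bound
  have hsqle : Real.sqrt (4*π) ≤ 4 := by
    have h16 : (4:ℝ)*π ≤ 16 := by nlinarith [pi_le_four]
    calc Real.sqrt (4*π) ≤ Real.sqrt 16 := Real.sqrt_le_sqrt h16
      _ = 4 := by rw [show (16:ℝ) = 4^2 by norm_num, Real.sqrt_sq (by norm_num : (0:ℝ) ≤ 4)]
  have hinvle : (((2*π:ℝ))^(4:ℕ))⁻¹ ≤ (1296:ℝ)⁻¹ := by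
    have h6 : (6:ℝ) ≤ 2*π := by nlinarith [pi_gt_three]
    have : (1296:ℝ) ≤ (2*π)^(4:ℕ) := by
      calc (1296:ℝ) = 6^(4:ℕ) := by norm_num
        _ ≤ (2*π)^(4:ℕ) := pow_le_pow_left₀ (by norm_num) h6 4
    exact inv_anti₀ (by norm_num) this
  have hconst : ((2*π:ℝ)^(4:ℕ))⁻¹ * (24*π) * Real.sqrt (4*π) ≤ 50 := by
    calc ((2*π:ℝ)^(4:ℕ))⁻¹ * (24*π) * Real.sqrt (4*π)
        ≤ (1296:ℝ)⁻¹ * (24*4) * 4 := by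
          apply mul_le_mul (mul_le_mul hinvle (by nlinarith [pi_le_four]) (by positivity)
            (by norm_num)) hsqle (Real.sqrt_nonneg _) (by norm_num)
      _ ≤ 50 := by norm_num
  -- P Q W
  have hQ2 : (2:ℝ) ≤ ρ ^ (1 / (2 * cVal ε * M)) := by
    calc (2:ℝ) = ((2:ℝ) ^ ((2:ℝ) * cVal ε * M)) ^ (1 / (2 * cVal ε * M)) := by
          rw [← Real.rpow_mul (by norm_num : (0:ℝ) ≤ 2), mul_one_div,
            div_self (ne_of_gt hθ), Real.rpow_one]
      _ ≤ ρ ^ (1 / (2 * cVal ε * M)) :=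
          Real.rpow_le_rpow (by positivity) hρ2a (by positivity)
  have hPQ : ρ ^ (1 / (cVal ε * M)) = ρ ^ (1 / (2 * cVal ε * M)) * ρ ^ (1 / (2 * cVal ε * M)) := by
    rw [← Real.rpow_add hρ0]
    congr 1
    field_simp
    ring
  have hW0 : (0:ℝ) < ρ ^ (-(1/2:ℝ) + ε) := Real.rpow_pos_of_pos hρ0 _
  have hQ0 : (0:ℝ) < ρ ^ (1 / (2 * cVal ε * M)) := Real.rpow_pos_of_pos hρ0 _
  have hP0 : (0:ℝ) < ρ ^ (1 / (cVal ε * M)) := Real.rpow_pos_of_pos hρ0 _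
  -- final chain
  have hEneg : (0:ℝ) ≤ ρ ^ (-(((n : ℝ) - 1) / (cVal ε * M))) :=
    (Real.rpow_pos_of_pos hρ0 _).le
  calc ρ ^ (-(((n : ℝ) - 1) / (cVal ε * M))) * ((2 * π) ^ (4:ℕ))⁻¹ * (volume S).toReal
      ≤ ρ ^ (-(((n : ℝ) - 1) / (cVal ε * M))) * ((2 * π) ^ (4:ℕ))⁻¹ * (12*R*δ*(2*π*kF*δ)) := by
        apply mul_le_mul_of_nonneg_left hV (by positivity)
    _ = ((2*π)^(4:ℕ))⁻¹ * (24*π) * (ρ ^ (-(((n : ℝ) - 1) / (cVal ε * M))) * (kF * (R * δ^2))) := by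
        ring
    _ = ((2*π)^(4:ℕ))⁻¹ * (24*π) * (Real.sqrt (4*π) *
          (ρ ^ (1 / (cVal ε * M)) * ρ ^ (-(1/2:ℝ) + ε))) := by rw [hkey]
    _ ≤ 100 * ρ ^ (-(1/2) + ε) * (ρ ^ (1 / (cVal ε * M)) - ρ ^ (1 / (2 * cVal ε * M))) := by
        have hPQ2 : ρ ^ (1 / (2 * cVal ε * M)) ≤ ρ ^ (1 / (cVal ε * M)) / 2 := by
          rw [hPQ]; nlinarith
        have hKnn : (0:ℝ) ≤ ((2*π:ℝ)^(4:ℕ))⁻¹ * (24*π) * Real.sqrt (4*π) := by positivity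
        nlinarith [mul_pos hP0 hW0, mul_le_mul_of_nonneg_right hconst (mul_pos hP0 hW0).le,
          mul_nonneg hW0.le (by linarith : (0:ℝ) ≤ ρ ^ (1 / (cVal ε * M)) - ρ ^ (1 / (2 * cVal ε * M)))]
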